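/- Let J_≤ = {f ∈ C^∞(ℝ) | f(x) = 0 for all x ≤ 0} and let sq: ℝ → ℝ be the map x ↦ x². Then: (a) for every σ ∈ J_≤, the composite σ ∘ sq has all iterated derivatives equal to 0 at 0; consequently (b) the C^∞(ℝ)-submodule of C^∞(ℝ) generated by {σ ∘ sq | σ ∈ J_≤} consists of functions all of whose derivatives vanish at 0, and is therefore a proper submodule of {f ∈ C^∞(ℝ) | f(0) = 0}; in particular it does not contain the identity function x ↦ x. -/

import Mathlib

open scoped Manifold

noncomputable section

/-- The ring `C^∞(ℝ)` of smooth real-valued functions on `ℝ`. -/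
abbrev SmoothR : Type := C^(⊤ : ℕ∞)⟮modelWithCornersSelf ℝ ℝ, ℝ; ℝ⟯

/-- The ideal `J_≤` of smooth functions vanishing at all `x ≤ 0`. -/
def Jle : Ideal SmoothR where
  carrier := {f : SmoothR | ∀ x : ℝ, x ≤ 0 → f x = 0}
  add_mem' := by intro a b ha hb x hx; simp [ha x hx, hb x hx]
  zero_mem' := by intro x hx; simp
  smul_mem' := by intro c f hf x hx; simp [smul_eq_mul, hf x hx]

/-- The ideal `I₀` of smooth functions vanishing at `0`. -/
def idealAtZero : Ideal SmoothR :=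
  RingHom.ker (ContMDiffMap.evalRingHom (0 : ℝ))

open scoped ContDiff

namespace FlatAux

/-- derivative of a smooth function vanishing on `Iic 0` also vanishes on `Iic 0` -/
lemma deriv_vanish {h : ℝ → ℝ} (hs : ContDiff ℝ ∞ h) (hz : ∀ x ≤ 0, h x = 0) :
    ∀ x ≤ 0, deriv h x = 0 := by
  have hneg : ∀ x < 0, deriv h x = 0 := by
    intro x hx
    have he : h =ᶠ[nhds x] fun _ => (0 : ℝ) :=
      Filter.eventuallyEq_of_mem (Iio_mem_nhds hx) fun y hy => hz y (le_of_lt hy)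
    rw [he.deriv_eq, deriv_const]
  intro x hx
  rcases lt_or_eq_of_le hx with h1 | h1
  · exact hneg x h1
  · subst h1
    have hc : Continuous (deriv h) := hs.continuous_deriv (by exact_mod_cast le_top)
    have t1 : Filter.Tendsto (deriv h) (nhdsWithin (0:ℝ) (Set.Iio (0:ℝ)))
        (nhds (deriv h 0)) :=
      (hc.continuousAt).continuousWithinAt.tendsto
    have t2 : Filter.Tendsto (deriv h) (nhdsWithin (0:ℝ) (Set.Iio (0:ℝ))) (nhds 0) := by
      refine Filter.Tendsto.congr' ?_ tendsto_const_nhds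
      filter_upwards [self_mem_nhdsWithin] with y hy
      exact (hneg y (by simpa using hy)).symm
    exact tendsto_nhds_unique t1 t2

/-- Representation: finite sums of `c i x * h i (x^2)` with `h i` vanishing on `Iic 0`. -/
def Rep (f : ℝ → ℝ) : Prop :=
  ∃ (m : ℕ) (c h : Fin m → ℝ → ℝ),
    (∀ i, ContDiff ℝ ∞ (c i)) ∧ (∀ i, ContDiff ℝ ∞ (h i)) ∧
    (∀ i, ∀ x ≤ 0, h i x = 0) ∧ ∀ x, f x = ∑ i, c i x * h i (x ^ 2)

lemma rep_congr {f g : ℝ → ℝ} (hfg : ∀ x, f x = g x) (hg : Rep g) : Rep f := by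
  obtain ⟨m, c, h, hc, hh, hv, he⟩ := hg
  exact ⟨m, c, h, hc, hh, hv, fun x => (hfg x).trans (he x)⟩

lemma rep_zero : Rep (fun _ => (0 : ℝ)) :=
  ⟨0, ![], ![], by simp, by simp, by simp, by simp⟩

lemma rep_add {f g : ℝ → ℝ} (hf : Rep f) (hg : Rep g) : Rep (fun x => f x + g x) := by
  obtain ⟨m, c, h, hc, hh, hv, he⟩ := hf
  obtain ⟨m', c', h', hc', hh', hv', he'⟩ := hg
  refine ⟨m + m', Fin.append c c', Fin.append h h', ?_, ?_, ?_, ?_⟩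
  · intro i
    induction i using Fin.addCases with
    | left j => rw [Fin.append_left]; exact hc j
    | right j => rw [Fin.append_right]; exact hc' j
  · intro i
    induction i using Fin.addCases with
    | left j => rw [Fin.append_left]; exact hh j
    | right j => rw [Fin.append_right]; exact hh' j
  · intro i
    induction i using Fin.addCases with
    | left j => rw [Fin.append_left]; exact hv j
    | right j => rw [Fin.append_right]; exact hv' j
  · intro x
    show f x + g x = _
    rw [Fin.sum_univ_add, he x, he' x]
    congr 1
    · exact Finset.sum_congr rfl fun j _ => by rw [Fin.append_left, Fin.append_left]
    · exact Finset.sum_congr rfl fun j _ => by rw [Fin.append_right, Fin.append_right]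

lemma rep_val_zero {f : ℝ → ℝ} (hf : Rep f) : f 0 = 0 := by
  obtain ⟨m, c, h, hc, hh, hv, he⟩ := hf
  rw [he 0]
  refine Finset.sum_eq_zero fun i _ => ?_
  rw [show ((0:ℝ) ^ 2) = 0 by norm_num, hv i 0 le_rfl, mul_zero]

lemma rep_contDiff {f : ℝ → ℝ} (hf : Rep f) : ContDiff ℝ ∞ f := by
  obtain ⟨m, c, h, hc, hh, hv, he⟩ := hf
  have : ContDiff ℝ ∞ (fun x : ℝ => ∑ i, c i x * h i (x ^ 2)) := by
    apply ContDiff.sum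
    intro i _
    exact (hc i).mul ((hh i).comp (contDiff_id.pow 2))
  have hfe : f = fun x : ℝ => ∑ i, c i x * h i (x ^ 2) := funext he
  rw [hfe]; exact this

lemma rep_deriv {f : ℝ → ℝ} (hf : Rep f) : Rep (deriv f) := by
  obtain ⟨m, c, h, hc, hh, hv, he⟩ := hf
  have hterm : ∀ (i : Fin m) (x : ℝ),
      HasDerivAt (fun x : ℝ => c i x * h i (x ^ 2))
        (deriv (c i) x * h i (x ^ 2) + c i x * (deriv (h i) (x ^ 2) * (2 * x))) x := by
    intro i x
    have h1 : HasDerivAt (c i) (deriv (c i) x) x :=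
      ((hc i).differentiable (by simp) x).hasDerivAt
    have h2 : HasDerivAt (fun y : ℝ => y ^ 2) (2 * x) x := by
      simpa using (hasDerivAt_pow 2 x)
    have h3 : HasDerivAt (h i) (deriv (h i) (x ^ 2)) (x ^ 2) :=
      ((hh i).differentiable (by simp) (x ^ 2)).hasDerivAt
    have h4 : HasDerivAt (fun y : ℝ => h i (y ^ 2)) (deriv (h i) (x ^ 2) * (2 * x)) x :=
      HasDerivAt.comp x h3 h2
    exact h1.mul h4
  have hDeriv : ∀ x, deriv f x =
      ∑ i, (deriv (c i) x * h i (x ^ 2) + c i x * (deriv (h i) (x ^ 2) * (2 * x))) := by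
    intro x
    have : HasDerivAt f
        (∑ i, (deriv (c i) x * h i (x ^ 2) + c i x * (deriv (h i) (x ^ 2) * (2 * x)))) x := by
      have := HasDerivAt.fun_sum (fun i (_ : i ∈ Finset.univ) => hterm i x)
      exact this.congr_of_eventuallyEq (Filter.Eventually.of_forall fun y => he y)
    exact this.deriv
  have rep1 : Rep (fun x => ∑ i, deriv (c i) x * h i (x ^ 2)) := by
    refine ⟨m, fun i => deriv (c i), h, ?_, hh, hv, fun _ => rfl⟩
    intro i; exact (contDiff_infty_iff_deriv.mp (hc i)).2
  have rep2 : Rep (fun x => ∑ i, (c i x * (2 * x)) * deriv (h i) (x ^ 2)) := by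
    refine ⟨m, fun i x => c i x * (2 * x), fun i => deriv (h i), ?_, ?_, ?_, fun _ => rfl⟩
    · intro i; exact (hc i).mul (contDiff_const.mul contDiff_id)
    · intro i; exact (contDiff_infty_iff_deriv.mp (hh i)).2
    · intro i; exact deriv_vanish (hh i) (hv i)
  refine rep_congr (fun x => ?_) (rep_add rep1 rep2)
  rw [hDeriv x, ← Finset.sum_add_distrib]
  exact Finset.sum_congr rfl fun i _ => by ring

lemma rep_iteratedDeriv {f : ℝ → ℝ} (hf : Rep f) (n : ℕ) : Rep (iteratedDeriv n f) := by
  induction n with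
  | zero => simpa [iteratedDeriv_zero] using hf
  | succ n ih => rw [iteratedDeriv_succ]; exact rep_deriv ih

end FlatAux

open FlatAux in
/-- (a) For every `σ ∈ J_≤`, the composite `σ ∘ sq` with `sq : x ↦ x²`
is flat at `0`; consequently (b) the `C^∞(ℝ)`-submodule of `C^∞(ℝ)` generated by the
`σ ∘ sq` consists of functions flat at `0`, is strictly contained in
`{f | f 0 = 0}`, and does not contain the identity function. -/
theorem pullback_along_square_is_flat :
    (∀ σ : SmoothR, σ ∈ Jle →
      ∀ n : ℕ, iteratedDeriv n (fun x : ℝ => σ (x ^ 2)) 0 = 0) ∧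
    (∀ g : SmoothR,
      g ∈ Submodule.span SmoothR
          {g : SmoothR | ∃ σ : SmoothR, σ ∈ Jle ∧ ∀ x : ℝ, g x = σ (x ^ 2)} →
      ∀ n : ℕ, iteratedDeriv n (g : ℝ → ℝ) 0 = 0) ∧
    (Submodule.span SmoothR
        {g : SmoothR | ∃ σ : SmoothR, σ ∈ Jle ∧ ∀ x : ℝ, g x = σ (x ^ 2)}
      < (idealAtZero : Submodule SmoothR SmoothR)) ∧
    ((ContMDiffMap.id : SmoothR) ∉ Submodule.span SmoothR
        {g : SmoothR | ∃ σ : SmoothR, σ ∈ Jle ∧ ∀ x : ℝ, g x = σ (x ^ 2)}) := by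
  have hJle : ∀ σ : SmoothR, σ ∈ Jle → ∀ x : ℝ, x ≤ 0 → σ x = 0 := fun σ hσ => hσ
  have hrepGen : ∀ σ : SmoothR, σ ∈ Jle → Rep (fun x : ℝ => σ (x ^ 2)) := by
    intro σ hσ
    refine ⟨1, fun _ _ => 1, fun _ => σ, fun _ => contDiff_const,
      fun _ => σ.contMDiff.contDiff, fun _ => hJle σ hσ, fun x => by simp⟩
  have parta : ∀ σ : SmoothR, σ ∈ Jle →
      ∀ n : ℕ, iteratedDeriv n (fun x : ℝ => σ (x ^ 2)) 0 = 0 :=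
    fun σ hσ n => rep_val_zero (rep_iteratedDeriv (hrepGen σ hσ) n)
  have hspanRep : ∀ g : SmoothR,
      g ∈ Submodule.span SmoothR
        {g : SmoothR | ∃ σ : SmoothR, σ ∈ Jle ∧ ∀ x : ℝ, g x = σ (x ^ 2)} →
      Rep (g : ℝ → ℝ) := by
    intro g hg
    refine Submodule.span_induction ?_ ?_ ?_ ?_ hg
    · rintro f ⟨σ, hσ, hf⟩
      exact rep_congr hf (hrepGen σ hσ)
    · exact rep_congr (fun x => by simp) rep_zero
    · intro f f' _ _ hf hf'
      exact rep_congr (fun x => by simp) (rep_add hf hf')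
    · intro c f _ hf
      obtain ⟨m, cc, hh, hcc, hhh, hvv, hee⟩ := hf
      refine ⟨m, fun i x => c x * cc i x, hh,
        fun i => (c.contMDiff.contDiff).mul (hcc i), hhh, hvv, fun x => ?_⟩
      have : (c • f : SmoothR) x = c x * f x := by
        simp [smul_eq_mul]
      rw [this, hee x, Finset.mul_sum]
      exact Finset.sum_congr rfl fun i _ => by ring
  have partb : ∀ g : SmoothR,
      g ∈ Submodule.span SmoothR
        {g : SmoothR | ∃ σ : SmoothR, σ ∈ Jle ∧ ∀ x : ℝ, g x = σ (x ^ 2)} →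
      ∀ n : ℕ, iteratedDeriv n (g : ℝ → ℝ) 0 = 0 :=
    fun g hg n => rep_val_zero (rep_iteratedDeriv (hspanRep g hg) n)
  have hle : Submodule.span SmoothR
        {g : SmoothR | ∃ σ : SmoothR, σ ∈ Jle ∧ ∀ x : ℝ, g x = σ (x ^ 2)}
      ≤ (idealAtZero : Submodule SmoothR SmoothR) := by
    intro g hg
    have h0 : (g : ℝ → ℝ) 0 = 0 := by
      simpa [iteratedDeriv_zero] using partb g hg 0
    show g ∈ RingHom.ker (ContMDiffMap.evalRingHom (0 : ℝ))
    rw [RingHom.mem_ker]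
    exact h0
  have hidnot : (ContMDiffMap.id : SmoothR) ∉ Submodule.span SmoothR
      {g : SmoothR | ∃ σ : SmoothR, σ ∈ Jle ∧ ∀ x : ℝ, g x = σ (x ^ 2)} := by
    intro hmem
    have h1 := partb _ hmem 1
    have hco : ((ContMDiffMap.id : SmoothR) : ℝ → ℝ) = fun x => x := rfl
    rw [hco, iteratedDeriv_one] at h1
    simp at h1
  have hidmem : (ContMDiffMap.id : SmoothR) ∈ (idealAtZero : Submodule SmoothR SmoothR) := by
    show _ ∈ RingHom.ker (ContMDiffMap.evalRingHom (0 : ℝ))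
    rw [RingHom.mem_ker]
    rfl
  refine ⟨parta, partb, lt_of_le_of_ne hle ?_, hidnot⟩
  intro heq
  exact hidnot (heq ▸ hidmem)
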